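/- Let m, n be positive integers with m | n, and let μ₂ be the mn/m × mn/m-style block operator on P^m as above, with μ an endomorphism of P whose minimal polynomial is the monic degree-(n/m) polynomial R̃. Then the minimal polynomial of μ₂ is R̃(z^m), which has degree n. -/

import Mathlib

/-!
Write `q = ∑_{r < m} X ^ r * q_r (X ^ m)` with `q_r = residuePart m r q`. On the vectors
`cyclicSingle μ m a p` (`μ ^ (a / m) p` in slot `a % m`) the operator `μ₂ = cyclicBlock μ m`
acts as the shift `a ↦ a + 1`. Hence `μ₂ ^ m` is `μ` acting diagonally and `μ₂ ^ r` moves the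
first slot to slot `r` for `r < m`, so `q(μ₂) (p, 0, …, 0) = (q_0(μ) p, …, q_{m-1}(μ) p)`.
Thus `q(μ₂) = 0` iff `R̃ = minpoly μ` divides every `q_r`, i.e. iff `R̃(X ^ m) ∣ q`.
-/

open Polynomial

namespace Polynomial

variable {R : Type*} [CommSemiring R]

noncomputable def residuePart (m r : ℕ) (q : R[X]) : R[X] :=
  q.sum fun k a => if k % m = r then monomial (k / m) a else 0

theorem coeff_residuePart {m r : ℕ} (hr : r < m) (q : R[X]) (t : ℕ) :
    (residuePart m r q).coeff t = q.coeff (t * m + r) := by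
  rw [residuePart, sum_def, finsetSum_coeff, Finset.sum_eq_single (t * m + r)]
  · have hdiv : (t * m + r) / m = t := by
      rw [Nat.add_comm, Nat.add_mul_div_right _ _ (Nat.zero_lt_of_lt hr), Nat.div_eq_of_lt hr,
        zero_add]
    simp [Nat.mul_add_mod_of_lt hr, hdiv]
  · intro k _ hk
    split_ifs with h
    · rw [coeff_monomial, if_neg]
      rintro rfl
      exact hk (h ▸ Nat.div_add_mod' k m).symm
    · rfl
  · intro h
    simp [notMem_support_iff.mp h]

theorem sum_X_pow_mul_expand_residuePart {m : ℕ} (hm : 0 < m) (q : R[X]) :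
    ∑ r : Fin m, X ^ (r : ℕ) * expand R m (residuePart m r q) = q := by
  ext k
  rw [finsetSum_coeff, Finset.sum_eq_single ⟨k % m, Nat.mod_lt k hm⟩]
  · rw [coeff_X_pow_mul', coeff_expand hm, if_pos (Nat.mod_le k m), if_pos (Nat.dvd_sub_mod k),
      coeff_residuePart (Nat.mod_lt k hm), Nat.div_mul_cancel (Nat.dvd_sub_mod k),
      Nat.sub_add_cancel (Nat.mod_le k m)]
  · intro r _ hr
    rw [coeff_X_pow_mul', coeff_expand hm]
    split_ifs with hrk hdvd
    · refine absurd (Fin.ext ?_) hr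
      rw [← Nat.mod_eq_of_lt r.isLt]
      exact (Nat.modEq_iff_dvd' hrk).2 hdvd
    · rfl
    · rfl
  · simp

theorem expand_dvd_of_forall_dvd_residuePart {m : ℕ} (hm : 0 < m) {f q : R[X]}
    (h : ∀ r : Fin m, f ∣ residuePart m r q) : expand R m f ∣ q := by
  rw [← sum_X_pow_mul_expand_residuePart hm q]
  exact Finset.dvd_sum fun r _ => (_root_.map_dvd (expand R m) (h r)).mul_left _

end Polynomial

section CyclicBlock

open Fin.NatCast

variable {R M : Type*} [CommSemiring R] [AddCommMonoid M] [Module R M]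

def Module.End.piMapAlgHom (ι : Type*) : Module.End R M →ₐ[R] Module.End R (ι → M) where
  toFun f := LinearMap.piMap fun _ => f
  map_one' := rfl
  map_mul' _ _ := rfl
  map_zero' := rfl
  map_add' _ _ := rfl
  commutes' _ := rfl

theorem Module.End.piMapAlgHom_single {ι : Type*} [DecidableEq ι] (f : Module.End R M) (i : ι)
    (x : M) : piMapAlgHom ι f (Pi.single i x) = Pi.single i (f x) := by
  ext j
  exact Pi.apply_single (fun _ => f) (fun _ => map_zero f) i x j

/-- `(p₀, …, p_{m-1}) ↦ (μ p_{m-1}, p₀, …, p_{m-2})`: in `Fin m`, `0 - 1 = m - 1`. -/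
def cyclicBlock (μ : Module.End R M) (m : ℕ) [NeZero m] : Module.End R (Fin m → M) :=
  LinearMap.pi fun i => (if i = 0 then μ else 1) ∘ₗ LinearMap.proj (i - 1)

def cyclicSingle (μ : Module.End R M) (m : ℕ) [NeZero m] (a : ℕ) (p : M) : Fin m → M :=
  Pi.single (a : Fin m) ((μ ^ (a / m)) p)

variable (μ : Module.End R M) {m : ℕ} [NeZero m]

theorem cyclicBlock_apply (p : Fin m → M) (i : Fin m) :
    cyclicBlock μ m p i = if i = 0 then μ (p (i - 1)) else p (i - 1) := by
  by_cases h : i = 0 <;> simp [cyclicBlock, h]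

theorem cyclicSingle_of_lt {a : ℕ} (ha : a < m) (p : M) :
    cyclicSingle μ m a p = Pi.single (a : Fin m) p := by
  simp [cyclicSingle, Nat.div_eq_of_lt ha]

theorem cyclicSingle_add_self (a : ℕ) (p : M) :
    cyclicSingle μ m (a + m) p = cyclicSingle μ m a (μ p) := by
  rw [cyclicSingle, cyclicSingle, Nat.cast_add, Fin.natCast_self, add_zero,
    Nat.add_div_right _ (NeZero.pos m), pow_succ, Module.End.mul_apply]

theorem cyclicBlock_cyclicSingle (a : ℕ) (p : M) :
    cyclicBlock μ m (cyclicSingle μ m a p) = cyclicSingle μ m (a + 1) p := by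
  ext i
  simp only [cyclicBlock_apply, cyclicSingle, Pi.single_apply, Nat.cast_succ, sub_eq_iff_eq_add]
  by_cases hi : i = a + 1
  · rw [if_pos hi, if_pos hi]
    by_cases h0 : i = 0
    · have hdvd : m ∣ a + 1 := Fin.natCast_eq_zero.mp (by rw [Nat.cast_succ, ← hi, h0])
      rw [if_pos h0, Nat.succ_div_of_dvd hdvd, pow_succ', Module.End.mul_apply]
    · have hdvd : ¬ m ∣ a + 1 := by
        intro h; exact h0 (by rw [hi, ← Nat.cast_succ, Fin.natCast_eq_zero.mpr h])
      rw [if_neg h0, Nat.succ_div_of_not_dvd hdvd]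
  · simp [hi]

theorem cyclicBlock_pow_cyclicSingle (k a : ℕ) (p : M) :
    (cyclicBlock μ m ^ k) (cyclicSingle μ m a p) = cyclicSingle μ m (a + k) p := by
  induction k with
  | zero => rfl
  | succ k ih => rw [pow_succ', Module.End.mul_apply, ih, cyclicBlock_cyclicSingle, add_assoc]

theorem cyclicBlock_pow_self : cyclicBlock μ m ^ m = Module.End.piMapAlgHom (Fin m) μ := by
  refine LinearMap.pi_ext fun j x => ?_
  have hj (y : M) : cyclicSingle μ m j y = Pi.single j y := by
    rw [cyclicSingle_of_lt μ j.isLt, Fin.cast_val_eq_self]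
  rw [Module.End.piMapAlgHom_single, ← hj, cyclicBlock_pow_cyclicSingle, cyclicSingle_add_self,
    hj]

theorem cyclicBlock_pow_single_zero (r : Fin m) (x : M) :
    (cyclicBlock μ m ^ (r : ℕ)) (Pi.single 0 x) = Pi.single r x := by
  have h0 : cyclicSingle μ m 0 x = Pi.single 0 x := by simp [cyclicSingle]
  rw [← h0, cyclicBlock_pow_cyclicSingle, zero_add, cyclicSingle_of_lt μ r.isLt,
    Fin.cast_val_eq_self]

theorem aeval_cyclicBlock_expand (f : R[X]) :
    aeval (cyclicBlock μ m) (expand R m f) = Module.End.piMapAlgHom (Fin m) (aeval μ f) := by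
  rw [expand_aeval, cyclicBlock_pow_self, aeval_algHom_apply]

theorem aeval_cyclicBlock_single_zero (q : R[X]) (p : M) :
    aeval (cyclicBlock μ m) q (Pi.single 0 p) =
      fun r : Fin m => aeval μ (residuePart m r q) p := by
  conv_lhs => rw [← sum_X_pow_mul_expand_residuePart (NeZero.pos m) q]
  simp only [map_sum, map_mul, map_pow, aeval_X, aeval_cyclicBlock_expand, LinearMap.sum_apply,
    Module.End.mul_apply, Module.End.piMapAlgHom_single, cyclicBlock_pow_single_zero]
  exact Finset.univ_sum_single _

end CyclicBlock

section Field

variable {K M : Type*} [Field K] [AddCommGroup M] [Module K M] (μ : Module.End K M)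
  {m : ℕ} [NeZero m]

theorem aeval_cyclicBlock_eq_zero_iff (q : K[X]) :
    aeval (cyclicBlock μ m) q = 0 ↔ expand K m (minpoly K μ) ∣ q := by
  constructor
  · intro hq
    refine expand_dvd_of_forall_dvd_residuePart (NeZero.pos m) fun r => minpoly.dvd K μ ?_
    ext p
    have := aeval_cyclicBlock_single_zero μ (m := m) q p
    rw [hq] at this
    exact (congr_fun this r).symm
  · rintro ⟨g, rfl⟩
    rw [map_mul, aeval_cyclicBlock_expand, minpoly.aeval, map_zero, zero_mul]

theorem minpoly_cyclicBlock [FiniteDimensional K M] :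
    minpoly K (cyclicBlock μ m) = expand K m (minpoly K μ) := by
  have hiff := aeval_cyclicBlock_eq_zero_iff μ (m := m)
  refine eq_of_monic_of_associated (minpoly.monic (Algebra.IsIntegral.isIntegral _))
    ((minpoly.monic (Algebra.IsIntegral.isIntegral μ)).expand (NeZero.pos m))
    (associated_of_dvd_dvd ?_ ?_)
  · exact minpoly.dvd K _ ((hiff _).2 dvd_rfl)
  · exact (hiff _).1 (minpoly.aeval K _)

end Field

/-- The minimal polynomial of the cyclic block operator `μ₂` on `P^m` is
`R̃(z^m)`, which has degree `n`. -/
theorem stmt_3 (P : Type*) [AddCommGroup P] [Module ℂ P] [FiniteDimensional ℂ P]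
    (m n : ℕ) (hm : 0 < m) (hdvd : m ∣ n)
    (R : Polynomial ℂ) (hdeg : R.natDegree = n / m)
    (μ : Module.End ℂ P) (hmin : minpoly ℂ μ = R)
    (μ₂ : Module.End ℂ (Fin m → P))
    (hμ₂ : ∀ (p : Fin m → P) (i : Fin m),
      μ₂ p i = if (i : ℕ) = 0 then μ (p ⟨m - 1, by omega⟩)
        else p ⟨(i : ℕ) - 1, by omega⟩) :
    minpoly ℂ μ₂ = R.comp (Polynomial.X ^ m) ∧
      (R.comp (Polynomial.X ^ m)).natDegree = n := by
  obtain ⟨k, rfl⟩ : ∃ k, m = k + 1 := ⟨m - 1, by omega⟩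
  have hμ₂_eq : μ₂ = cyclicBlock μ (k + 1) := by
    refine LinearMap.ext fun p => funext fun i => ?_
    rw [hμ₂, cyclicBlock_apply]
    by_cases hi : i = 0
    · simp only [hi, Fin.val_zero, if_true, zero_sub]
      exact congr_arg (μ ∘ p) (Fin.ext Fin.coe_neg_one.symm)
    · simp only [Fin.val_eq_zero_iff, hi, if_false]
      exact congr_arg p (Fin.ext (Fin.val_sub_one_of_ne_zero hi).symm)
  refine ⟨?_, ?_⟩
  · rw [hμ₂_eq, minpoly_cyclicBlock, hmin, expand_eq_comp_X_pow]
  · rw [natDegree_comp, natDegree_X_pow, hdeg, Nat.div_mul_cancel hdvd]
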